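/- For any matrix A ∈ Z^{m×n}, κ̄_A ≤ g_∞(A) ≤ n·κ̄_A, where g_∞(A) is the maximum ℓ_∞-norm of an element of the Graver basis of A. -/

import Mathlib

open Finset

variable {ι : Type*} [Fintype ι] [DecidableEq ι]

/-- `y` conforms to `x` if `x i * y i > 0` whenever `y i ≠ 0`. -/
def Conforms (y x : ι → ℝ) : Prop := ∀ i, y i ≠ 0 → x i * y i > 0

/-- An elementary vector of `W`: a support-minimal nonzero vector of `W`. -/
def IsElementary (W : Submodule ℝ (ι → ℝ)) (g : ι → ℝ) : Prop :=
  g ∈ W ∧ g ≠ 0 ∧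
    ∀ h ∈ W, h ≠ 0 → {i | h i ≠ 0} ⊆ {i | g i ≠ 0} → {i | h i ≠ 0} = {i | g i ≠ 0}

/-- The fractional circuit imbalance measure `κ_W`. -/
noncomputable def kappa (W : Submodule ℝ (ι → ℝ)) : ℝ :=
  sSup ({1} ∪ {t : ℝ | ∃ g : ι → ℝ, IsElementary W g ∧
    ∃ i j, g i ≠ 0 ∧ g j ≠ 0 ∧ t = |g j| / |g i|})

/-- An integer elementary vector, normalized so that the gcd of its entries is 1. -/
def IsIntElementary (W : Submodule ℝ (ι → ℝ)) (g : ι → ℤ) : Prop :=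
  IsElementary W (fun i => (g i : ℝ)) ∧ Finset.univ.gcd (fun i => (g i).natAbs) = 1

/-- The max-circuit imbalance measure `κ̄_W`. -/
noncomputable def barKappa (W : Submodule ℝ (ι → ℝ)) : ℕ :=
  sSup {k : ℕ | ∃ g : ι → ℤ, IsIntElementary W g ∧
    k = Finset.univ.sup fun i => (g i).natAbs}

/-- The lcm-circuit imbalance measure `κ̇_W`: the least positive integer divisible by
every entry of every normalized integer elementary vector. -/
noncomputable def dotKappa (W : Submodule ℝ (ι → ℝ)) : ℕ :=
  sInf {k : ℕ | 0 < k ∧ ∀ g : ι → ℤ, IsIntElementary W g → ∀ i, g i ≠ 0 → (g i).natAbs ∣ k}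

/-- A rational linear subspace: one spanned by rational vectors. -/
def IsRationalSubspace (W : Submodule ℝ (ι → ℝ)) : Prop :=
  ∃ S : Set (ι → ℚ), W = Submodule.span ℝ ((fun v : ι → ℚ => fun i => ((v i : ℝ))) '' S)

/-- The orthogonal complement of `W` in `ℝ^ι` with the standard inner product. -/
def orthComp (W : Submodule ℝ (ι → ℝ)) : Submodule ℝ (ι → ℝ) where
  carrier := {v | ∀ w ∈ W, ∑ i, v i * w i = 0}
  add_mem' := by
    intro a b ha hb w hw
    have := ha w hw
    have := hb w hw
    simp only [Set.mem_setOf_eq, Pi.add_apply, add_mul, Finset.sum_add_distrib, *]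
    ring
  zero_mem' := by intro w hw; simp
  smul_mem' := by
    intro c a ha w hw
    have h := ha w hw
    simp only [Set.mem_setOf_eq, Pi.smul_apply, smul_eq_mul, mul_assoc, ← Finset.mul_sum, h,
      mul_zero]

/-- `g` is an element of the Graver basis of `A`: a nonzero integer kernel element such
that no other nonzero integer kernel element conformal with `g` is entrywise dominated
by `g`. -/
def InGraverBasis {m n : ℕ} (A : Matrix (Fin m) (Fin n) ℤ) (g : Fin n → ℤ) : Prop :=
  A.mulVec g = 0 ∧ g ≠ 0 ∧
    ∀ h : Fin n → ℤ, A.mulVec h = 0 → h ≠ 0 → h ≠ g →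
      (∀ i, h i ≠ 0 → 0 < g i * h i) → ¬ (∀ i, |h i| ≤ |g i|)

/-- `𝔤_∞(A)`: the maximum `ℓ_∞` norm of an element of the Graver basis of `A`. -/
noncomputable def graverMaxInf {m n : ℕ} (A : Matrix (Fin m) (Fin n) ℤ) : ℕ :=
  sSup {k : ℕ | ∃ g : Fin n → ℤ, InGraverBasis A g ∧
    k = Finset.univ.sup fun i => (g i).natAbs}

/-!
A normalized integer circuit `g` is in the Graver basis: an integer kernel vector supported
inside `support g` is an integer multiple of `g`, because the entries of `g` have gcd `1`.
This gives `κ̄ ≤ 𝔤_∞`.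

Conversely, a Graver element `g` is a sum of at most `n` elementary vectors `c • h` conformal to
`g`, with `c > 0` and `h` a normalized circuit. If `c > 1` then `h` is conformal to and
dominated by `g`, so `h = g`; either way `|c • h| ≤ |h| ≤ κ̄` entrywise, hence `|gᵢ| ≤ n κ̄`.
-/

section Conformal

open Function

variable {α : Type*}

theorem conforms_self (x : α → ℝ) : Conforms x x :=
  fun _ => mul_self_pos.2

theorem Conforms.support_subset {x y : α → ℝ} (h : Conforms y x) : support y ⊆ support x :=
  fun _ hi hx => by simpa [hx] using h _ hi

theorem Conforms.trans {x y z : α → ℝ} (hyx : Conforms y x) (hzy : Conforms z y) :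
    Conforms z x := by
  intro i hz
  have hyz := hzy i hz
  have hxy := hyx i (left_ne_zero_of_mul hyz.ne')
  have : 0 < x i * z i * (y i * y i) := by nlinarith [mul_pos hxy hyz]
  exact pos_of_mul_pos_left this (mul_self_nonneg _)

theorem Conforms.smul {x y : α → ℝ} (h : Conforms y x) {c : ℝ} (hc : 0 < c) :
    Conforms (c • y) x := by
  intro i hi
  have := h i (right_ne_zero_of_mul hi)
  simp only [Pi.smul_apply, smul_eq_mul] at this ⊢
  nlinarith

theorem conforms_sub_of_abs_le {x z : α → ℝ} (h : ∀ i, |z i| ≤ |x i|) : Conforms (x - z) x := by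
  intro i hi
  simp only [Pi.sub_apply] at hi ⊢
  have hsq : z i ^ 2 ≤ x i ^ 2 := sq_le_sq.2 (h i)
  have : 0 < (x i - z i) ^ 2 := by positivity
  nlinarith

theorem abs_le_of_conforms_of_list_sum_eq {l : List (α → ℝ)} {x : α → ℝ} (hsum : l.sum = x)
    (hl : ∀ e ∈ l, Conforms e x) {e : α → ℝ} (he : e ∈ l) (i : α) : |e i| ≤ |x i| := by
  have hnonneg : ∀ e ∈ l, 0 ≤ x i * e i := fun e he => by
    by_cases hei : e i = 0
    · simp [hei]
    · exact (hl e he i hei).le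
  have hsingle : x i * e i ≤ x i * x i := by
    have := List.single_le_sum (l := l.map fun e => x i * e i)
      (by simpa using hnonneg) _ (List.mem_map_of_mem he)
    rwa [List.sum_map_mul_left, ← Pi.list_sum_apply, hsum] at this
  rcases eq_or_ne (x i) 0 with hxi | hxi
  · by_contra hlt
    have := hl e he i (by rintro h; simp [h] at hlt)
    simp [hxi] at this
  · have hpos : 0 < |x i| := abs_pos.2 hxi
    refine le_of_mul_le_mul_left ?_ hpos
    rw [← abs_mul, ← abs_mul, abs_of_nonneg (hnonneg e he), abs_mul_self]
    exact hsingle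

theorem exists_abs_smul_le [Finite α] (x : α → ℝ) {y : α → ℝ} (hy : y ≠ 0) :
    ∃ s i₀, y i₀ ≠ 0 ∧ s * y i₀ = x i₀ ∧ ∀ i, |s * y i| ≤ |x i| := by
  obtain ⟨i₀, hi₀, hmin⟩ := Set.exists_min_image (support y) (fun i => |x i| / |y i|)
    (Set.toFinite _) (support_nonempty_iff.2 hy)
  refine ⟨x i₀ / y i₀, i₀, hi₀, div_mul_cancel₀ _ hi₀, fun i => ?_⟩
  rcases eq_or_ne (y i) 0 with hyi | hyi
  · simp [hyi]
  · have hpos : 0 < |y i| := abs_pos.2 hyi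
    calc |x i₀ / y i₀ * y i| = |x i₀| / |y i₀| * |y i| := by rw [abs_mul, abs_div]
      _ ≤ |x i| / |y i| * |y i| := by gcongr 1; exact hmin i hyi
      _ = |x i| := div_mul_cancel₀ _ hpos.ne'

/-- Subtracting the largest multiple of `y` that `x` dominates kills a coordinate of `x`. -/
theorem exists_conforms_sub_smul [Finite α] {x y : α → ℝ} (hy : y ≠ 0)
    (hyx : support y ⊆ support x) :
    ∃ s : ℝ, Conforms (x - s • y) x ∧ support (x - s • y) ⊂ support x ∧
      (Conforms y x → 0 < s) := by
  obtain ⟨s, i₀, hi₀, hs, hle⟩ := exists_abs_smul_le x hy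
  have hconf : Conforms (x - s • y) x := conforms_sub_of_abs_le hle
  refine ⟨s, hconf, ?_, fun hyx' => ?_⟩
  · refine (Set.ssubset_iff_of_subset hconf.support_subset).2 ⟨i₀, hyx hi₀, ?_⟩
    simp [hs]
  · have := hyx' i₀ hi₀
    rw [← hs] at this
    nlinarith [mul_self_pos.2 hi₀]

theorem support_subset_of_conformal {R : Type*} [MulZeroClass R] [Preorder R] {g h : α → R}
    (hconf : ∀ i, h i ≠ 0 → 0 < g i * h i) : support h ⊆ support g :=
  fun i hi hgi => by simpa [hgi] using hconf i hi

variable {R : Type*} [Ring R] [LinearOrder R] [IsStrictOrderedRing R]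

theorem eq_of_conformal_of_abs_eq {g h : α → R} (hconf : ∀ i, h i ≠ 0 → 0 < g i * h i)
    (habs : ∀ i, |h i| = |g i|) : h = g := by
  funext i
  rcases abs_eq_abs.1 (habs i) with hi | hi
  · exact hi
  by_cases h0 : h i = 0
  · have := habs i
    rw [h0, abs_zero, eq_comm, abs_eq_zero] at this
    rw [h0, this]
  · have := hconf i h0
    rw [hi, mul_neg] at this
    exact absurd (neg_pos.1 this) (mul_self_nonneg _).not_gt

theorem conformal_of_sign_eq {g h : α → R} (hs : ∀ i, SignType.sign (g i) = SignType.sign (h i))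
    (i : α) (hi : h i ≠ 0) : 0 < g i * h i := by
  rcases hi.lt_or_gt with hneg | hpos
  · exact mul_pos_of_neg_of_neg
      (sign_eq_neg_one_iff.1 ((hs i).trans (sign_eq_neg_one_iff.2 hneg))) hneg
  · exact mul_pos (sign_eq_one_iff.1 ((hs i).trans (sign_eq_one_iff.2 hpos))) hpos

end Conformal

section Elementary

open Function

variable {α : Type*} {W : Submodule ℝ (α → ℝ)}

theorem IsElementary.smul {e : α → ℝ} (he : IsElementary W e) {c : ℝ} (hc : c ≠ 0) :
    IsElementary W (c • e) := by
  refine ⟨W.smul_mem c he.1, smul_ne_zero hc he.2.1, ?_⟩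
  change ∀ h ∈ W, h ≠ 0 → support h ⊆ support (c • e) → support h = support (c • e)
  rw [support_const_smul_of_ne_zero c e hc]
  exact he.2.2

theorem IsElementary.exists_eq_smul {e h : α → ℝ} (he : IsElementary W e) (hh : h ∈ W)
    (hsupp : support h ⊆ support e) : ∃ t : ℝ, h = t • e := by
  obtain ⟨j, hj⟩ : ∃ j, e j ≠ 0 := Function.ne_iff.1 he.2.1
  refine ⟨h j / e j, ?_⟩
  -- `w ∈ W` vanishes at `j ∈ support e`, so minimality of `support e` forces `w = 0`.
  set w := e j • h - h j • e
  suffices w = 0 by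
    ext i
    have := congr_fun (sub_eq_zero.1 this) i
    simp only [Pi.smul_apply, smul_eq_mul] at this ⊢
    field_simp
    linarith
  by_contra hw
  have hwsupp : support w ⊆ support e := by
    intro i hi
    by_contra hei
    have hhi : h i = 0 := by_contra fun hhi => hei (hsupp hhi)
    exact hi (by simp [w, notMem_support.1 hei, hhi])
  have hjw : j ∉ support w := by simp [w, mul_comm]
  have heq : support w = support e :=
    he.2.2 w (W.sub_mem (W.smul_mem _ hh) (W.smul_mem _ he.1)) hw hwsupp
  exact hjw (heq ▸ hj)

variable [Finite α]

theorem exists_isElementary_conforms {x : α → ℝ} (hx : x ∈ W) (hx0 : x ≠ 0) :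
    ∃ e, IsElementary W e ∧ Conforms e x := by
  induction hn : (support x).ncard using Nat.strong_induction_on generalizing x with
  | _ n ih =>
  by_cases hel : IsElementary W x
  · exact ⟨x, hel, conforms_self x⟩
  obtain ⟨y, hyW, hy0, hyx, hne⟩ : ∃ y ∈ W, y ≠ 0 ∧ support y ⊆ support x ∧
      support y ≠ support x := by
    have : ¬∀ y ∈ W, y ≠ 0 → support y ⊆ support x → support y = support x :=
      fun h => hel ⟨hx, hx0, h⟩
    push Not at this
    exact this
  obtain ⟨s, hconf, hlt, -⟩ := exists_conforms_sub_smul hy0 hyx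
  have hx'0 : x - s • y ≠ 0 := by
    intro h0
    rw [sub_eq_zero] at h0
    refine hne (hyx.antisymm ?_)
    rw [h0]
    exact support_const_smul_subset s y
  obtain ⟨e, he, hex'⟩ := ih _ (hn ▸ Set.ncard_lt_ncard hlt) (W.sub_mem hx (W.smul_mem s hyW))
    hx'0 rfl
  exact ⟨e, he, hconf.trans hex'⟩

theorem exists_conformal_decomposition {x : α → ℝ} (hx : x ∈ W) :
    ∃ l : List (α → ℝ), l.length ≤ (support x).ncard ∧ l.sum = x ∧
      ∀ e ∈ l, IsElementary W e ∧ Conforms e x := by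
  induction hn : (support x).ncard using Nat.strong_induction_on generalizing x with
  | _ n ih =>
  rcases eq_or_ne x 0 with rfl | hx0
  · exact ⟨[], by simp, by simp, by simp⟩
  obtain ⟨e, he, hex⟩ := exists_isElementary_conforms hx hx0
  obtain ⟨s, hconf, hlt, hs⟩ := exists_conforms_sub_smul he.2.1 hex.support_subset
  have hlt' := hn ▸ Set.ncard_lt_ncard hlt
  obtain ⟨l, hlen, hsum, hl⟩ := ih _ hlt' (W.sub_mem hx (W.smul_mem s he.1)) rfl
  refine ⟨s • e :: l, by simp; omega, by simp [hsum], ?_⟩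
  rintro f (_ | ⟨_, hf⟩)
  · exact ⟨he.smul (hs hex).ne', hex.smul (hs hex)⟩
  · exact ⟨(hl f hf).1, hconf.trans (hl f hf).2⟩

end Elementary

section IntegerKernel

open Function Matrix

variable {α β : Type*} [Fintype α]

theorem cast_mem_ker_iff (M : Matrix β α ℤ) (g : α → ℤ) :
    (fun i => (g i : ℝ)) ∈ LinearMap.ker (M.map (Int.cast : ℤ → ℝ)).mulVecLin ↔ M *ᵥ g = 0 := by
  have hcast : M.map (Int.cast : ℤ → ℝ) *ᵥ (fun i => (g i : ℝ)) = fun r => ((M *ᵥ g) r : ℝ) :=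
    funext fun r => ((Int.castRingHom ℝ).map_mulVec M g r).symm
  simp [hcast, funext_iff]

/-- If `M x = 0` over `ℝ` then `Mᵀ M` is singular, a property of the integer matrix `Mᵀ M`,
and an integer kernel vector `g` of `Mᵀ M` has `‖M g‖² = gᵀ Mᵀ M g = 0`. -/
theorem exists_int_mulVec_eq_zero [Fintype β] (M : Matrix β α ℤ) {x : α → ℝ} (hx : x ≠ 0)
    (hMx : M.map (Int.cast : ℤ → ℝ) *ᵥ x = 0) : ∃ g : α → ℤ, g ≠ 0 ∧ M *ᵥ g = 0 := by
  classical
  have hmap : (Mᵀ * M).map (Int.castRingHom ℝ) =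
      (M.map (Int.cast : ℤ → ℝ))ᵀ * M.map (Int.cast : ℤ → ℝ) := by
    rw [Matrix.map_mul, Matrix.transpose_map]; rfl
  have hdet : (Mᵀ * M).det = 0 := by
    have : ((Mᵀ * M).map (Int.castRingHom ℝ)).det = 0 := by
      rw [← exists_mulVec_eq_zero_iff, hmap]
      exact ⟨x, hx, by rw [← mulVec_mulVec, hMx, mulVec_zero]⟩
    rw [← RingHom.mapMatrix_apply, ← RingHom.map_det] at this
    simpa using this
  obtain ⟨g, hg0, hg⟩ := exists_mulVec_eq_zero_iff.2 hdet
  refine ⟨g, hg0, ?_⟩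
  have hsq : g ⬝ᵥ (Mᵀ * M) *ᵥ g = 0 := by rw [hg, dotProduct_zero]
  rw [← mulVec_mulVec, dotProduct_mulVec, vecMul_transpose] at hsq
  exact dotProduct_self_eq_zero.1 hsq

/-- Appending to `M` the rows `eᵢᵀ`, `i ∉ support x`, forces the support. -/
theorem exists_int_mulVec_eq_zero_support_subset [Fintype β] (M : Matrix β α ℤ) {x : α → ℝ}
    (hx : x ≠ 0) (hMx : M.map (Int.cast : ℤ → ℝ) *ᵥ x = 0) :
    ∃ g : α → ℤ, g ≠ 0 ∧ M *ᵥ g = 0 ∧ support g ⊆ support x := by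
  classical
  set D : Matrix α α ℤ := diagonal fun i => if x i = 0 then 1 else 0
  have hDx : D.map (Int.cast : ℤ → ℝ) *ᵥ x = 0 := by
    ext i
    by_cases hxi : x i = 0 <;> simp [D, diagonal_map, mulVec_diagonal, hxi]
  obtain ⟨g, hg0, hg⟩ := exists_int_mulVec_eq_zero (fromRows M D) hx
    (by rw [fromRows_map, fromRows_mulVec, hMx, hDx]; ext (_ | _) <;> rfl)
  rw [fromRows_mulVec] at hg
  refine ⟨g, hg0, funext fun r => congr_fun hg (Sum.inl r), fun i hgi hxi => hgi ?_⟩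
  simpa [D, mulVec_diagonal, hxi] using congr_fun hg (Sum.inr i)

theorem exists_eq_smul_gcd_natAbs_eq_one {h : α → ℤ} (hh : h ≠ 0) :
    ∃ (d : ℕ) (g : α → ℤ), 0 < d ∧ h = (d : ℤ) • g ∧ univ.gcd (fun i => (g i).natAbs) = 1 := by
  set d := univ.gcd fun i => (h i).natAbs
  have hd : d ≠ 0 := fun hd => hh (funext fun i => Int.natAbs_eq_zero.1
    (Finset.gcd_eq_zero_iff.1 hd i (mem_univ i)))
  have hdvd : ∀ i, (d : ℤ) ∣ h i := fun i => Int.natCast_dvd.2 (Finset.gcd_dvd (mem_univ i))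
  have hmul : ∀ i, h i = d * (h i / d) := fun i => (Int.mul_ediv_cancel' (hdvd i)).symm
  refine ⟨d, fun i => h i / d, Nat.pos_of_ne_zero hd, funext hmul, ?_⟩
  obtain ⟨j, hj⟩ := Function.ne_iff.1 hh
  refine Finset.extract_gcd' (fun i => (h i).natAbs) _ ⟨j, mem_univ j, by simpa using hj⟩
    fun i _ => ?_
  conv_lhs => rw [hmul i]
  simp [Int.natAbs_mul, d]

end IntegerKernel

section IntElementary

open Function Matrix

variable {α : Type*} [Fintype α] {W : Submodule ℝ (α → ℝ)}

theorem exists_int_smul_eq_of_gcd_natAbs_eq_one {g h : α → ℤ}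
    (hg : univ.gcd (fun i => (g i).natAbs) = 1) (hgh : ∀ i j, h i * g j = g i * h j) :
    ∃ c : ℤ, h = c • g := by
  have hdvd : ∀ i, g i ∣ h i := by
    intro i
    have : (g i).natAbs ∣ univ.gcd fun j => (h i).natAbs * (g j).natAbs :=
      Finset.dvd_gcd fun j _ => ⟨(h j).natAbs, by rw [← Int.natAbs_mul, ← Int.natAbs_mul, hgh]⟩
    rw [Finset.gcd_mul_left, hg] at this
    exact Int.natAbs_dvd_natAbs.1 (by simpa using this)
  obtain ⟨j, hj⟩ : ∃ j, g j ≠ 0 := by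
    by_contra! h0
    have : univ.gcd (fun i => (g i).natAbs) = 0 :=
      Finset.gcd_eq_zero_iff.2 fun i _ => by simp [h0 i]
    omega
  obtain ⟨c, hc⟩ := hdvd j
  refine ⟨c, funext fun i => mul_left_cancel₀ hj ?_⟩
  simp only [Pi.smul_apply, smul_eq_mul]
  rw [mul_comm, hgh, hc]
  ring

theorem IsIntElementary.ne_zero {g : α → ℤ} (hg : IsIntElementary W g) : g ≠ 0 := by
  rintro rfl
  exact hg.1.2.1 (funext fun _ => Int.cast_zero)

theorem IsIntElementary.neg {g : α → ℤ} (hg : IsIntElementary W g) : IsIntElementary W (-g) := by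
  refine ⟨?_, by simpa using hg.2⟩
  convert hg.1.smul (neg_ne_zero.2 one_ne_zero) using 1
  ext i
  simp

theorem IsIntElementary.exists_int_smul_eq {g h : α → ℤ} (hg : IsIntElementary W g)
    (hh : (fun i => (h i : ℝ)) ∈ W) (hsupp : support h ⊆ support g) : ∃ c : ℤ, h = c • g := by
  obtain ⟨t, ht⟩ := hg.1.exists_eq_smul hh fun i hi => by
    simpa using hsupp (by simpa using hi)
  refine exists_int_smul_eq_of_gcd_natAbs_eq_one hg.2 fun i j => ?_
  have hti : ∀ k, (h k : ℝ) = t * g k := fun k => congr_fun ht k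
  exact_mod_cast (by rw [hti, hti]; ring : (h i : ℝ) * g j = g i * h j)

theorem IsIntElementary.abs_le_of_support_subset {g h : α → ℤ} (hg : IsIntElementary W g)
    (hh : (fun i => (h i : ℝ)) ∈ W) (hh0 : h ≠ 0) (hsupp : support h ⊆ support g) (i : α) :
    |g i| ≤ |h i| := by
  obtain ⟨c, rfl⟩ := hg.exists_int_smul_eq hh hsupp
  have hc : c ≠ 0 := by
    rintro rfl
    simp at hh0
  simpa [abs_mul] using le_mul_of_one_le_left (abs_nonneg (g i)) (Int.one_le_abs hc)

theorem IsIntElementary.eq_of_conformal_of_abs_le {g h : α → ℤ} (hg : IsIntElementary W g)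
    (hh : (fun i => (h i : ℝ)) ∈ W) (hh0 : h ≠ 0) (hconf : ∀ i, h i ≠ 0 → 0 < g i * h i)
    (hle : ∀ i, |h i| ≤ |g i|) : h = g :=
  eq_of_conformal_of_abs_eq hconf fun i =>
    (hle i).antisymm (hg.abs_le_of_support_subset hh hh0 (support_subset_of_conformal hconf) i)

/-- A normalized integer elementary vector is determined by its sign pattern. -/
theorem finite_setOf_isIntElementary (W : Submodule ℝ (α → ℝ)) :
    {g : α → ℤ | IsIntElementary W g}.Finite := by
  refine Set.Finite.of_finite_image (f := fun g i => SignType.sign (g i)) (Set.toFinite _) ?_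
  intro g hg h hh hsign
  have hs : ∀ i, SignType.sign (g i) = SignType.sign (h i) := congr_fun hsign
  have hgh := conformal_of_sign_eq hs
  have hhg := conformal_of_sign_eq fun i => (hs i).symm
  exact (hg.eq_of_conformal_of_abs_le hh.1.1 hh.ne_zero hgh fun i =>
    hh.abs_le_of_support_subset hg.1.1 hg.ne_zero (support_subset_of_conformal hhg) i).symm

theorem natAbs_le_barKappa {g : α → ℤ} (hg : IsIntElementary W g) (i : α) :
    (g i).natAbs ≤ barKappa W := by
  refine (Finset.le_sup (f := fun i => (g i).natAbs) (mem_univ i)).trans (le_csSup ?_ ⟨g, hg, rfl⟩)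
  refine ((finite_setOf_isIntElementary W).image
    fun g => univ.sup fun i => (g i).natAbs).bddAbove.mono ?_
  rintro _ ⟨g, hg, rfl⟩
  exact ⟨g, hg, rfl⟩

theorem IsElementary.exists_eq_smul_isIntElementary {β : Type*} [Fintype β] (M : Matrix β α ℤ)
    {e : α → ℝ} (he : IsElementary (LinearMap.ker (M.map (Int.cast : ℤ → ℝ)).mulVecLin) e) :
    ∃ (c : ℝ) (g : α → ℤ), 0 < c ∧
      IsIntElementary (LinearMap.ker (M.map (Int.cast : ℤ → ℝ)).mulVecLin) g ∧
      e = c • fun i => (g i : ℝ) := by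
  obtain ⟨h, hh0, hMh, hsupp⟩ := exists_int_mulVec_eq_zero_support_subset M he.2.1 he.1
  obtain ⟨d, g, hd, rfl, hg1⟩ := exists_eq_smul_gcd_natAbs_eq_one hh0
  have hMg : M *ᵥ g = 0 := by
    rw [mulVec_smul] at hMh
    exact (smul_eq_zero.1 hMh).resolve_left (by exact_mod_cast hd.ne')
  obtain ⟨t, ht⟩ := he.exists_eq_smul ((cast_mem_ker_iff M g).2 hMg) fun i hi =>
    hsupp (by simpa [hd.ne'] using hi)
  have hti : ∀ i, (g i : ℝ) = t * e i := fun i => congr_fun ht i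
  have hg0 : g ≠ 0 := by
    rintro rfl
    simp at hh0
  have ht0 : t ≠ 0 := by
    rintro rfl
    exact hg0 (funext fun i => by simpa using hti i)
  have hg : IsIntElementary _ g := ⟨ht ▸ he.smul ht0, hg1⟩
  rcases ht0.lt_or_gt with hneg | hpos
  · refine ⟨-t⁻¹, -g, neg_pos.2 (inv_lt_zero.2 hneg), hg.neg, ?_⟩
    ext i
    simp [hti]
    field_simp
  · refine ⟨t⁻¹, g, inv_pos.2 hpos, hg, ?_⟩
    ext i
    simp [hti]
    field_simp

end IntElementary

section Graver

variable {m n : ℕ} (A : Matrix (Fin m) (Fin n) ℤ)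

theorem isIntElementary_inGraverBasis {g : Fin n → ℤ}
    (hg : IsIntElementary (LinearMap.ker (A.map (Int.cast : ℤ → ℝ)).mulVecLin) g) :
    InGraverBasis A g :=
  ⟨(cast_mem_ker_iff A g).1 hg.1.1, hg.ne_zero, fun h hh hh0 hne hconf hle =>
    hne (hg.eq_of_conformal_of_abs_le ((cast_mem_ker_iff A h).2 hh) hh0 hconf hle)⟩

variable {A}

/-- Write `e = c • h` with `h` a normalized circuit: if `c ≤ 1` then `|e| ≤ |h|` directly,
and if `c > 1` then `h` is conformal to `g` and dominated by it, so `h = g` by minimality. -/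
theorem InGraverBasis.abs_le_barKappa {g : Fin n → ℤ} (hg : InGraverBasis A g) {e : Fin n → ℝ}
    (he : IsElementary (LinearMap.ker (A.map (Int.cast : ℤ → ℝ)).mulVecLin) e)
    (hconf : Conforms e fun i => (g i : ℝ)) (hle : ∀ i, |e i| ≤ |(g i : ℝ)|) (i : Fin n) :
    |e i| ≤ barKappa (LinearMap.ker (A.map (Int.cast : ℤ → ℝ)).mulVecLin) := by
  obtain ⟨c, h, hc, hh, rfl⟩ := he.exists_eq_smul_isIntElementary A
  have hch : ∀ i, |c * h i| ≤ |(h i : ℝ)| := by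
    rcases le_or_gt c 1 with hc1 | hc1
    · intro i
      rw [abs_mul, abs_of_pos hc]
      exact mul_le_of_le_one_left (abs_nonneg _) hc1
    have hhg : h = g := by
      by_contra hne
      refine hg.2.2 h ((cast_mem_ker_iff A h).1 hh.1.1) hh.ne_zero hne (fun i hi => ?_) fun i => ?_
      · have := hconf i (by simp [hc.ne', hi])
        simp only [Pi.smul_apply, smul_eq_mul] at this
        have : (0 : ℝ) < g i * h i := pos_of_mul_pos_right (by linarith) hc.le
        exact_mod_cast this
      · have := hle i
        simp only [Pi.smul_apply, smul_eq_mul, abs_mul, abs_of_pos hc] at this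
        exact_mod_cast (le_mul_of_one_le_left (abs_nonneg _) hc1.le).trans this
    subst hhg
    simpa using hle
  calc |(c • fun i => (h i : ℝ)) i| = |c * h i| := rfl
    _ ≤ (h i).natAbs := by simpa [Nat.cast_natAbs] using hch i
    _ ≤ _ := by exact_mod_cast natAbs_le_barKappa hh i

theorem InGraverBasis.natAbs_le {g : Fin n → ℤ} (hg : InGraverBasis A g) (i : Fin n) :
    (g i).natAbs ≤ n * barKappa (LinearMap.ker (A.map (Int.cast : ℤ → ℝ)).mulVecLin) := by
  obtain ⟨l, hlen, hsum, hl⟩ := exists_conformal_decomposition ((cast_mem_ker_iff A g).2 hg.1)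
  have hlen' : l.length ≤ n := hlen.trans ((Set.ncard_le_card _).trans (Nat.card_fin n).le)
  set κ := barKappa (LinearMap.ker (A.map (Int.cast : ℤ → ℝ)).mulVecLin)
  have hterm : ∀ e ∈ l, |e i| ≤ κ := fun e he =>
    hg.abs_le_barKappa (hl e he).1 (hl e he).2
      (abs_le_of_conforms_of_list_sum_eq hsum (fun f hf => (hl f hf).2) he) i
  suffices ((g i).natAbs : ℝ) ≤ n * κ by exact_mod_cast this
  calc ((g i).natAbs : ℝ) = |(l.map fun e => e i).sum| := by
        rw [← Pi.list_sum_apply, hsum, Nat.cast_natAbs, Int.cast_abs]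
    _ ≤ (l.map fun e => |e i|).sum := by
        simpa [Function.comp_def] using
          Multiset.abs_sum_le_sum_abs (s := ((l.map fun e => e i) : Multiset ℝ))
    _ ≤ l.length • (κ : ℝ) := by
        simpa using List.sum_le_card_nsmul (l.map fun e => |e i|) _ (by simpa using hterm)
    _ ≤ n * κ := by
        rw [nsmul_eq_mul]
        exact mul_le_mul_of_nonneg_right (by exact_mod_cast hlen') (Nat.cast_nonneg _)

end Graver

/-- `κ̄_A ≤ 𝔤_∞(A) ≤ n · κ̄_A`. -/
theorem barKappa_graver_bounds {m n : ℕ} (A : Matrix (Fin m) (Fin n) ℤ) :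
    barKappa (LinearMap.ker (A.map (Int.cast : ℤ → ℝ)).mulVecLin) ≤ graverMaxInf A ∧
      graverMaxInf A ≤ n * barKappa (LinearMap.ker (A.map (Int.cast : ℤ → ℝ)).mulVecLin) := by
  have hub : n * barKappa (LinearMap.ker (A.map (Int.cast : ℤ → ℝ)).mulVecLin) ∈ upperBounds
      {k : ℕ | ∃ g : Fin n → ℤ, InGraverBasis A g ∧ k = Finset.univ.sup fun i => (g i).natAbs} := by
    rintro _ ⟨g, hg, rfl⟩
    exact Finset.sup_le fun i _ => hg.natAbs_le i
  refine ⟨csSup_le' ?_, csSup_le' hub⟩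
  rintro _ ⟨g, hg, rfl⟩
  exact le_csSup ⟨_, hub⟩ ⟨g, isIntElementary_inGraverBasis A hg, rfl⟩
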